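/- arXiv:1401.3685 — 2 statements merged into one kernel-verified Lean document; each statement's English description precedes it below -/
import Mathlib

section
/- Let S be a multiset of m points drawn independently and uniformly at random from a nonempty finite set P ⊆ R^d, and let Γ(S) be the mean of S. Then the expected value of Σ_{p∈P} ||p - Γ(S)||^2 equals (1 + 1/m) · Δ_1(P), where Δ_1(P) = Σ_{p∈P} ||p - μ(P)||^2. -/
/-!
For every point `v`, the parallel axis identity `∑ₚ ‖p - v‖² = Δ₁(P) + |P| ‖μ(P) - v‖²` reduces the
claim to the mean squared distance between `μ(P)` and the sample mean, i.e. to `m⁻²` times the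
second moment of a sum of `m` independent centred draws `Xᵢ - μ(P)`. The cross terms of that sum
average to zero, so its second moment is `m` times that of one draw, which is `Δ₁(P) / |P|`.
-/

open Finset
open scoped RealInnerProductSpace

section

variable {V : Type*} [NormedAddCommGroup V] [InnerProductSpace ℝ V]

theorem sum_sub_inv_card_smul_sum_eq_zero (s : Finset V) :
    ∑ p ∈ s, (p - (#s : ℝ)⁻¹ • ∑ q ∈ s, q) = 0 := by
  rcases s.eq_empty_or_nonempty with rfl | hs
  · simp
  rw [sum_sub_distrib, sum_const, ← Nat.cast_smul_eq_nsmul ℝ,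
    smul_inv_smul₀ (by exact_mod_cast hs.card_pos.ne'), sub_self]

theorem inv_card_smul_sum_sub {ι : Type*} {s : Finset ι} (hs : s.Nonempty) (x : ι → V) (v : V) :
    (#s : ℝ)⁻¹ • ∑ i ∈ s, (x i - v) = (#s : ℝ)⁻¹ • ∑ i ∈ s, x i - v := by
  rw [sum_sub_distrib, sum_const, smul_sub, ← Nat.cast_smul_eq_nsmul ℝ,
    inv_smul_smul₀ (by exact_mod_cast hs.card_pos.ne')]

theorem sum_norm_add_sq_of_sum_eq_zero {ι : Type*} (s : Finset ι) {c : ι → V}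
    (hc : ∑ i ∈ s, c i = 0) (w : V) :
    ∑ i ∈ s, ‖c i + w‖ ^ 2 = ∑ i ∈ s, ‖c i‖ ^ 2 + #s * ‖w‖ ^ 2 := by
  have hcross : ∑ i ∈ s, 2 * ⟪c i, w⟫ = 0 := by
    rw [← mul_sum, ← sum_inner, hc, inner_zero_left, mul_zero]
  simp only [norm_add_sq_real, sum_add_distrib, hcross, add_zero, sum_const, nsmul_eq_mul]

theorem sum_norm_sub_sq_eq_add_card_mul (s : Finset V) (v : V) :
    ∑ p ∈ s, ‖p - v‖ ^ 2 =
      ∑ p ∈ s, ‖p - (#s : ℝ)⁻¹ • ∑ q ∈ s, q‖ ^ 2 + #s * ‖(#s : ℝ)⁻¹ • ∑ q ∈ s, q - v‖ ^ 2 := by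
  rw [← sum_norm_add_sq_of_sum_eq_zero s (sum_sub_inv_card_smul_sum_eq_zero s)]
  simp only [sub_add_sub_cancel]

variable {α : Type*} [Fintype α] {c : α → V}

theorem sum_pi_norm_sum_sq_succ (hc : ∑ a, c a = 0) (k : ℕ) :
    ∑ s : Fin (k + 1) → α, ‖∑ i, c (s i)‖ ^ 2 =
      Fintype.card α ^ k * ∑ a, ‖c a‖ ^ 2 +
        Fintype.card α * ∑ s : Fin k → α, ‖∑ i, c (s i)‖ ^ 2 := by
  rw [← (Fin.consEquiv fun _ ↦ α).sum_comp, Fintype.sum_prod_type_right]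
  simp only [Fin.consEquiv_apply, Fin.sum_univ_succ, Fin.cons_zero, Fin.cons_succ,
    sum_norm_add_sq_of_sum_eq_zero univ hc, sum_add_distrib, sum_const, card_univ,
    Fintype.card_fun, Fintype.card_fin, nsmul_eq_mul, ← mul_sum]
  push_cast
  ring

theorem sum_pi_norm_sum_sq (hc : ∑ a, c a = 0) (m : ℕ) :
    ∑ s : Fin m → α, ‖∑ i, c (s i)‖ ^ 2 = m * Fintype.card α ^ (m - 1) * ∑ a, ‖c a‖ ^ 2 := by
  induction m with
  | zero => simp
  | succ k ih =>
    rw [sum_pi_norm_sum_sq_succ hc, ih]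
    rcases k with _ | k
    · simp
    · push_cast
      ring

end

theorem expected_cost_of_sample_mean_general {d : ℕ} (P : Finset (EuclideanSpace ℝ (Fin d)))
    (m : ℕ) (hm : 1 ≤ m) :
    (∑ s : Fin m → {x // x ∈ P},
        ∑ p ∈ P, ‖p - ((m : ℝ)⁻¹ • ∑ i, ((s i : EuclideanSpace ℝ (Fin d))))‖ ^ 2)
        / (P.card : ℝ) ^ m =
      (1 + 1 / (m : ℝ)) * ∑ p ∈ P, ‖p - ((P.card : ℝ)⁻¹ • ∑ q ∈ P, q)‖ ^ 2 := by
  set μ := (#P : ℝ)⁻¹ • ∑ q ∈ P, q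
  set Δ := ∑ p ∈ P, ‖p - μ‖ ^ 2
  set c : P → EuclideanSpace ℝ (Fin d) := fun a ↦ a - μ
  have hc : ∑ a, c a = 0 := by
    rw [sum_coe_sort P (· - μ)]
    exact sum_sub_inv_card_smul_sum_eq_zero P
  have hcost (s : Fin m → P) : ∑ p ∈ P, ‖p - (m : ℝ)⁻¹ • ∑ i, (s i : EuclideanSpace ℝ (Fin d))‖ ^ 2
      = Δ + #P * ((m : ℝ)⁻¹ ^ 2 * ‖∑ i, c (s i)‖ ^ 2) := by
    have hsamples : (univ : Finset (Fin m)).Nonempty := univ_nonempty_iff.mpr ⟨⟨0, hm⟩⟩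
    have hmean := inv_card_smul_sum_sub hsamples (fun i ↦ (s i : EuclideanSpace ℝ (Fin d))) μ
    rw [card_univ, Fintype.card_fin] at hmean
    rw [sum_norm_sub_sq_eq_add_card_mul, norm_sub_rev, ← hmean, norm_smul, mul_pow,
      norm_inv, RCLike.norm_natCast]
  rw [sum_congr rfl fun s _ ↦ hcost s, sum_add_distrib, ← mul_sum, ← mul_sum,
    sum_pi_norm_sum_sq hc, sum_coe_sort P (‖· - μ‖ ^ 2), sum_const, card_univ,
    Fintype.card_fun, Fintype.card_coe, Fintype.card_fin, nsmul_eq_mul]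
  obtain ⟨k, rfl⟩ : ∃ k, m = k + 1 := ⟨m - 1, by omega⟩
  rcases (#P).eq_zero_or_pos with hP | hP
  · simp [Δ, card_eq_zero.mp hP]
  field_simp
  push_cast
  ring

/-- Expected 1-means cost of the mean of `m` i.i.d. uniform samples from `P`:
the average over all `m`-tuples `s` from `P` of `∑_{p∈P} ‖p - Γ(s)‖²` equals
`(1 + 1/m) · Δ₁(P)` where `Δ₁(P) = ∑_{p∈P} ‖p - μ(P)‖²`. -/
theorem expected_cost_of_sample_mean {d : ℕ} (P : Finset (EuclideanSpace ℝ (Fin d)))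
    (hP : P.Nonempty) (m : ℕ) (hm : 1 ≤ m) :
    (∑ s : Fin m → {x // x ∈ P},
        ∑ p ∈ P, ‖p - ((m : ℝ)⁻¹ • ∑ i, ((s i : EuclideanSpace ℝ (Fin d))))‖ ^ 2)
        / (P.card : ℝ) ^ m =
      (1 + 1 / (m : ℝ)) * ∑ p ∈ P, ‖p - ((P.card : ℝ)⁻¹ • ∑ q ∈ P, q)‖ ^ 2 :=
  expected_cost_of_sample_mean_general P m hm
end

section
/- Let D be a distance measure satisfying β-approximate symmetry, α-approximate triangle inequality, and the centroid property, with α ≥ 1, 0 < β ≤ 1, and let η = (2α²/β²)(1 + 1/β), 0 < ε ≤ 1. Let O be an optimal cluster with center c (the centroid of O), m = |O|, and r = Δ(O, c)/m. Let C be a finite set of centers and p ∈ O a point with D(p, C)/Δ(O, C) ≤ (βε/(8αη))·(1/m). Then D(p, C) ≤ (ε/(4η))·(r + D(p, c)). -/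
set_option maxHeartbeats 1000000


/-- Points of an optimal cluster `O` with small conditional `D²`-sampling probability
w.r.t. the centers `C` are close to `C`: `D(p, C) ≤ (ε/(4η))·(r + D(p, c))`. -/
theorem low_prob_points_close {X : Type*} (D : X → X → ℝ)
    (hD : ∀ x y, 0 ≤ D x y)
    (α β : ℝ) (hα : 1 ≤ α) (hβ0 : 0 < β) (hβ1 : β ≤ 1)
    (hsymm : ∀ p q, β * D q p ≤ D p q ∧ D p q ≤ (1 / β) * D q p)
    (htri : ∀ p q r, D p q ≤ α * (D p r + D r q))
    (η : ℝ) (hη : η = (2 * α ^ 2 / β ^ 2) * (1 + 1 / β))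
    (ε : ℝ) (hε0 : 0 < ε) (hε1 : ε ≤ 1)
    (O : Finset X) (hO : O.Nonempty) (m : ℕ) (hm : m = O.card)
    (c : X) (hcentroid : ∀ c', (∑ x ∈ O, D x c') = (∑ x ∈ O, D x c) + (m : ℝ) * D c c')
    (r : ℝ) (hr : r = (∑ x ∈ O, D x c) / m)
    (C : Finset X) (hC : C.Nonempty) (p : X) (hp : p ∈ O)
    (hlow : (C.inf' hC fun c' => D p c') / (∑ x ∈ O, C.inf' hC fun c' => D x c') ≤
      (β * ε / (8 * α * η)) * (1 / m)) :
    (C.inf' hC fun c' => D p c') ≤ (ε / (4 * η)) * (r + D p c) := by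
  obtain ⟨q, hqC, hq⟩ := C.exists_mem_eq_inf' hC (fun c' => D p c')
  set d : X → ℝ := fun x => C.inf' hC fun c' => D x c' with hd
  have hd0 : ∀ x, 0 ≤ d x := fun x => Finset.le_inf' _ _ (fun c' _ => hD x c')
  have hm0 : 0 < (m : ℝ) := by
    have := Finset.card_pos.mpr hO
    rw [hm]; exact_mod_cast this
  have hα0 : (0:ℝ) < α := lt_of_lt_of_le one_pos hα
  have hη4 : 4 ≤ η := by
    rw [hη]
    have h1 : (2:ℝ) ≤ 2 * α ^ 2 / β ^ 2 := by
      rw [le_div_iff₀ (by positivity)]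
      nlinarith
    have h2 : (2:ℝ) ≤ 1 + 1 / β := by
      have : (1:ℝ) ≤ 1 / β := by
        rw [le_div_iff₀ hβ0]; linarith
      linarith
    nlinarith
  have hη0 : (0:ℝ) < η := by linarith
  have hr0 : 0 ≤ r := by
    rw [hr]
    apply div_nonneg _ (le_of_lt hm0)
    exact Finset.sum_nonneg fun x _ => hD x c
  -- bound on the sum of distances to C
  have hsum : (∑ x ∈ O, D x c) = (m : ℝ) * r := by
    rw [hr]; field_simp
  have hcq : D c q ≤ α * ((1 / β) * D p c + d p) := by
    have h1 := htri c q p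
    have h2 : D c p ≤ (1 / β) * D p c := (hsymm c p).2
    have h3 : D p q = d p := hq.symm
    nlinarith
  have hSle : (∑ x ∈ O, d x) ≤ (m : ℝ) * (r + (α / β) * D p c + α * d p) := by
    calc (∑ x ∈ O, d x) ≤ ∑ x ∈ O, D x q :=
          Finset.sum_le_sum fun x _ => Finset.inf'_le _ hqC
      _ = (∑ x ∈ O, D x c) + (m : ℝ) * D c q := hcentroid q
      _ = (m : ℝ) * r + (m : ℝ) * D c q := by rw [hsum]
      _ ≤ (m : ℝ) * (r + (α / β) * D p c + α * d p) := by
          have := mul_le_mul_of_nonneg_left hcq (le_of_lt hm0)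
          have hb : (m:ℝ) * (α * ((1/β) * D p c + d p))
              = (m:ℝ) * ((α/β) * D p c + α * d p) := by ring
          nlinarith [this]
  set S : ℝ := ∑ x ∈ O, d x with hS
  have hS0 : 0 ≤ S := Finset.sum_nonneg fun x _ => hd0 x
  have hdpS : d p ≤ S := Finset.single_le_sum (fun x _ => hd0 x) hp
  have hrhs0 : 0 ≤ (ε / (4 * η)) * (r + D p c) := by
    apply mul_nonneg (by positivity)
    have := hD p c; linarith
  rcases eq_or_lt_of_le hS0 with hS0' | hSpos
  · -- S = 0, hence d p = 0
    have : d p = 0 := le_antisymm (by rw [← hS0'] at hdpS; exact hdpS) (hd0 p)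
    rw [show (C.inf' hC fun c' => D p c') = d p from rfl, this]
    exact hrhs0
  · set K : ℝ := β * ε / (8 * α * η) with hK
    have hK0 : 0 < K := by positivity
    have hdpK : d p ≤ K * (r + (α / β) * D p c + α * d p) := by
      have h1 : d p ≤ K * (1 / m) * S := by
        have h := hlow
        rw [div_le_iff₀ hSpos] at h
        calc d p = (C.inf' hC fun c' => D p c') := rfl
          _ ≤ K * (1 / (m:ℝ)) * S := h
      calc d p ≤ K * (1 / m) * S := h1
        _ ≤ K * (1 / m) * ((m : ℝ) * (r + (α / β) * D p c + α * d p)) := by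
            apply mul_le_mul_of_nonneg_left hSle
            positivity
        _ = K * (r + (α / β) * D p c + α * d p) := by
            field_simp
    -- final algebra
    have hKα : K * α = β * ε / (8 * η) := by
      rw [hK]; field_simp
    have hKαsmall : K * α ≤ 1 / 2 := by
      rw [hKα, div_le_iff₀ (by positivity)]
      nlinarith
    show d p ≤ (ε / (4 * η)) * (r + D p c)
    have hdq := hq
    clear_value d S K
    clear hlow hq hdq hdpS hSle hcq hsum
    have hstep : d p ≤ K * r + (K * α / β) * D p c + (K * α) * d p := by
      have e : K * (r + (α / β) * D p c + α * d p)
          = K * r + (K * α / β) * D p c + (K * α) * d p := by ring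
      linarith [hdpK, e.ge, e.le]
    have hdp2 : d p ≤ 2 * K * r + (2 * (K * α) / β) * D p c := by
      have hh : (K * α) * d p ≤ (1 / 2) * d p :=
        mul_le_mul_of_nonneg_right hKαsmall (hd0 p)
      have e2 : 2 * ((K * α / β) * D p c) = (2 * (K * α) / β) * D p c := by ring
      linarith
    have h2Kα : 2 * (K * α) / β = ε / (4 * η) := by
      rw [hKα]; field_simp; ring
    have h2K : 2 * K ≤ ε / (4 * η) := by
      have e3 : 2 * (β * ε / (8 * α * η)) = (2 * β * ε) / (8 * α * η) := by ring
      rw [hK, e3, div_le_div_iff₀ (by positivity) (by positivity)]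
      have hβα : β ≤ α := le_trans hβ1 hα
      nlinarith [mul_pos hε0 hη0, mul_le_mul_of_nonneg_right hβα (le_of_lt (mul_pos hε0 hη0))]
    have hDpc0 := hD p c
    calc d p ≤ 2 * K * r + (2 * (K * α) / β) * D p c := hdp2
      _ ≤ (ε / (4 * η)) * r + (ε / (4 * η)) * D p c := by
          rw [h2Kα]
          have := mul_le_mul_of_nonneg_right h2K hr0
          linarith
      _ = (ε / (4 * η)) * (r + D p c) := by ring
end
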